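/- Let H = (V, E) be a finite collection of hyperedges with nonnegative submodular splitting functions g_f : 2^f → ℝ≥0, g_f(∅)=0. Fix e ∈ E and define ρ_e := ∑_{(u,v) ∈ V×V} g_e^{u→v} / (∑_{f ∈ E} g_f^{u→v}) with the zero-denominator convention. Then for every nonempty proper subset S ⊂ V with cut_H(S) > 0, g_e(S ∩ e) / cut_H(S) ≤ ρ_e. -/

import Mathlib

/-!
For a cut `S` and `u ∈ S ∩ e`, intersecting minimum `u → v` cuts of `g_e` over all `v ∉ S` gives a
set `C u ⊆ S ∩ e` containing `u`, so `S ∩ e` is the union of the `C u`. Submodularity and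
nonnegativity make `g_e` subadditive under both `∪` and `∩`, whence
`g_e(S ∩ e) ≤ ∑_{u ∈ S, v ∉ S} g_e^{u→v}`. Each `∑_f g_f^{u→v}` with `u ∈ S`, `v ∉ S` is at most
`cut_H(S)`, so dividing termwise by `cut_H(S)` gives at most the corresponding term of `ρ_e`.
-/

/-- The minimum directed cut of a splitting function `g` on hyperedge `e`
between `u` and `v`. -/
noncomputable def dirCut {V : Type*} [Fintype V] [DecidableEq V]
    (g : Finset V → ℝ) (e : Finset V) (u v : V) : ℝ :=
  sInf {x : ℝ | ∃ S : Finset V, u ∈ S ∧ v ∉ S ∧ x = g (S ∩ e)}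

/-- Over-estimated importance of hyperedge `e`; in Lean, `x / 0 = 0`, which matches
the convention that a fraction with zero denominator is zero. -/
noncomputable def rho {V ι : Type*} [Fintype V] [DecidableEq V]
    (E : Finset ι) (edge : ι → Finset V) (g : ι → Finset V → ℝ) (e : ι) : ℝ :=
  ∑ u : V, ∑ v : V,
    dirCut (g e) (edge e) u v / ∑ f ∈ E, dirCut (g f) (edge f) u v

/-- The cut value of `S` in the submodular hypergraph. -/
def cutH {V ι : Type*} [DecidableEq V]
    (E : Finset ι) (edge : ι → Finset V) (g : ι → Finset V → ℝ)
    (S : Finset V) : ℝ :=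
  ∑ f ∈ E, g f (S ∩ edge f)

open Finset

section Submodular

variable {α ι : Type*} [Lattice α] {g : α → ℝ} {e : α}

theorem apply_finset_sup_le_sum [OrderBot α] (h0 : g ⊥ = 0) (hnn : ∀ A ≤ e, 0 ≤ g A)
    (hsub : ∀ A ≤ e, ∀ B ≤ e, g (A ⊔ B) + g (A ⊓ B) ≤ g A + g B)
    {I : Finset ι} {F : ι → α} (hF : ∀ i ∈ I, F i ≤ e) :
    g (I.sup F) ≤ ∑ i ∈ I, g (F i) := by
  induction I using Finset.cons_induction with
  | empty => simp [h0]
  | cons i I hi ih =>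
    rw [sup_cons, sum_cons]
    have hFi : F i ≤ e := hF i (mem_cons_self i I)
    have hFI : ∀ j ∈ I, F j ≤ e := fun j hj => hF j (mem_cons_of_mem hj)
    linarith [hsub _ hFi _ (Finset.sup_le hFI), hnn (F i ⊓ I.sup F) (inf_le_left.trans hFi), ih hFI]

theorem apply_finset_inf'_le_sum (hnn : ∀ A ≤ e, 0 ≤ g A)
    (hsub : ∀ A ≤ e, ∀ B ≤ e, g (A ⊔ B) + g (A ⊓ B) ≤ g A + g B)
    {I : Finset ι} (hI : I.Nonempty) {F : ι → α} (hF : ∀ i ∈ I, F i ≤ e) :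
    g (I.inf' hI F) ≤ ∑ i ∈ I, g (F i) := by
  induction hI using Finset.Nonempty.cons_induction with
  | singleton i => simp
  | cons i I hi hI ih =>
    rw [inf'_cons hI, sum_cons]
    have hFi : F i ≤ e := hF i (mem_cons_self i I)
    have hFI : ∀ j ∈ I, F j ≤ e := fun j hj => hF j (mem_cons_of_mem hj)
    have hinf : I.inf' hI F ≤ e := by
      obtain ⟨j, hj⟩ := hI
      exact (inf'_le F hj).trans (hFI j hj)
    linarith [hsub _ hFi _ hinf, hnn _ (sup_le hFi hinf), ih hFI]

end Submodular

section DirCut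

variable {V : Type*} [Fintype V] [DecidableEq V] {g : Finset V → ℝ} {e : Finset V}

theorem dirCut_le (hnn : ∀ A ⊆ e, 0 ≤ g A) {u v : V} {T : Finset V} (hu : u ∈ T) (hv : v ∉ T) :
    dirCut g e u v ≤ g (T ∩ e) := by
  refine csInf_le ⟨0, ?_⟩ ⟨T, hu, hv, rfl⟩
  rintro x ⟨T', -, -, rfl⟩
  exact hnn _ inter_subset_right

theorem dirCut_nonneg (hnn : ∀ A ⊆ e, 0 ≤ g A) (u v : V) : 0 ≤ dirCut g e u v := by
  apply Real.sInf_nonneg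
  rintro x ⟨T, -, -, rfl⟩
  exact hnn _ inter_subset_right

theorem exists_dirCut_eq {u v : V} (huv : u ≠ v) :
    ∃ T : Finset V, u ∈ T ∧ v ∉ T ∧ dirCut g e u v = g (T ∩ e) := by
  have hfin : {x : ℝ | ∃ T : Finset V, u ∈ T ∧ v ∉ T ∧ x = g (T ∩ e)}.Finite := by
    refine (Set.finite_range fun T : Finset V => g (T ∩ e)).subset ?_
    rintro x ⟨T, -, -, rfl⟩
    exact ⟨T, rfl⟩
  have hne : {x : ℝ | ∃ T : Finset V, u ∈ T ∧ v ∉ T ∧ x = g (T ∩ e)}.Nonempty :=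
    ⟨_, {u}, mem_singleton_self u, by simpa using huv.symm, rfl⟩
  exact hne.csInf_mem hfin

theorem apply_inter_le_sum_dirCut (h0 : g ∅ = 0) (hnn : ∀ A ⊆ e, 0 ≤ g A)
    (hsub : ∀ A ⊆ e, ∀ B ⊆ e, g (A ∪ B) + g (A ∩ B) ≤ g A + g B)
    {S : Finset V} (hS : S ≠ univ) :
    g (S ∩ e) ≤ ∑ u ∈ S, ∑ v ∈ Sᶜ, dirCut g e u v := by
  have hSc : Sᶜ.Nonempty := nonempty_iff_ne_empty.2 (mt (compl_eq_empty_iff S).1 hS)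
  choose! T hTu hTv hT using fun u (hu : u ∈ S) v (hv : v ∈ Sᶜ) =>
    exists_dirCut_eq (g := g) (e := e) (ne_of_mem_of_not_mem hu (mem_compl.1 hv))
  set C : V → Finset V := fun u => Sᶜ.inf' hSc fun v => T u v ∩ e
  have hCe : ∀ u, C u ⊆ e := fun u =>
    (inf'_le _ hSc.choose_spec).trans inter_subset_right
  have hSe : S.sup C = S ∩ e := by
    refine le_antisymm (Finset.sup_le fun u hu x hx => ?_) fun x hx => ?_
    · refine mem_inter.2 ⟨of_not_not fun hxS => ?_, hCe u hx⟩
      have hxT : x ∈ T u x ∩ e := inf'_le (fun v => T u v ∩ e) (mem_compl.2 hxS) hx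
      exact hTv u hu x (mem_compl.2 hxS) (mem_inter.1 hxT).1
    · obtain ⟨hxS, hxe⟩ := mem_inter.1 hx
      refine le_sup (f := C) hxS ?_
      exact (le_inf' hSc _ fun v hv => singleton_subset_iff.2 (mem_inter.2 ⟨hTu x hxS v hv, hxe⟩))
        (mem_singleton_self x)
  calc g (S ∩ e) = g (S.sup C) := by rw [hSe]
    _ ≤ ∑ u ∈ S, g (C u) := apply_finset_sup_le_sum h0 hnn hsub fun u _ => hCe u
    _ ≤ ∑ u ∈ S, ∑ v ∈ Sᶜ, g (T u v ∩ e) := sum_le_sum fun u _ =>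
      apply_finset_inf'_le_sum hnn hsub hSc fun _ _ => inter_subset_right
    _ = ∑ u ∈ S, ∑ v ∈ Sᶜ, dirCut g e u v :=
      sum_congr rfl fun u hu => sum_congr rfl fun v hv => (hT u hu v hv).symm

end DirCut

theorem div_le_div_of_le_of_le {a b c : ℝ} (ha : 0 ≤ a) (hab : a ≤ b) (hbc : b ≤ c) :
    a / c ≤ a / b := by
  rcases (ha.trans hab).eq_or_lt with hb | hb
  · simp [le_antisymm (hb ▸ hab) ha]
  · exact div_le_div_of_nonneg_left ha hb hbc

section Hypergraph

variable {V ι : Type*} [Fintype V] [DecidableEq V]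
  {E : Finset ι} {edge : ι → Finset V} {g : ι → Finset V → ℝ}

theorem sum_dirCut_le_cutH (hnn : ∀ f ∈ E, ∀ A ⊆ edge f, 0 ≤ g f A)
    {S : Finset V} {u v : V} (hu : u ∈ S) (hv : v ∉ S) :
    ∑ f ∈ E, dirCut (g f) (edge f) u v ≤ cutH E edge g S :=
  sum_le_sum fun f hf => dirCut_le (hnn f hf) hu hv

theorem sum_dirCut_div_cutH_le_rho (hnn : ∀ f ∈ E, ∀ A ⊆ edge f, 0 ≤ g f A)
    {e : ι} (he : e ∈ E) (S : Finset V) :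
    ∑ u ∈ S, ∑ v ∈ Sᶜ, dirCut (g e) (edge e) u v / cutH E edge g S ≤ rho E edge g e := by
  have hterm : ∀ u v : V,
      0 ≤ dirCut (g e) (edge e) u v / ∑ f ∈ E, dirCut (g f) (edge f) u v := fun u v =>
    div_nonneg (dirCut_nonneg (hnn e he) u v)
      (sum_nonneg fun f hf => dirCut_nonneg (hnn f hf) u v)
  calc ∑ u ∈ S, ∑ v ∈ Sᶜ, dirCut (g e) (edge e) u v / cutH E edge g S
      ≤ ∑ u ∈ S, ∑ v ∈ Sᶜ, dirCut (g e) (edge e) u v / ∑ f ∈ E, dirCut (g f) (edge f) u v :=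
        sum_le_sum fun u hu => sum_le_sum fun v hv =>
          div_le_div_of_le_of_le (dirCut_nonneg (hnn e he) u v)
            (single_le_sum (f := fun f => dirCut (g f) (edge f) u v)
              (fun f hf => dirCut_nonneg (hnn f hf) u v) he)
            (sum_dirCut_le_cutH hnn hu (mem_compl.1 hv))
    _ ≤ rho E edge g e :=
        (sum_le_sum fun u _ => sum_le_univ_sum_of_nonneg (hterm u)).trans
          (sum_le_univ_sum_of_nonneg fun u => sum_nonneg fun v _ => hterm u v)

end Hypergraph

theorem stmt5 {V ι : Type*} [Fintype V] [DecidableEq V]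
    (E : Finset ι) (edge : ι → Finset V) (g : ι → Finset V → ℝ)
    (hg0 : ∀ f ∈ E, g f ∅ = 0)
    (hnn : ∀ f ∈ E, ∀ S ⊆ edge f, 0 ≤ g f S)
    (hsub : ∀ f ∈ E, ∀ A ⊆ edge f, ∀ B ⊆ edge f,
      g f (A ∪ B) + g f (A ∩ B) ≤ g f A + g f B)
    (e : ι) (he : e ∈ E) :
    ∀ S : Finset V, S ≠ ∅ → S ≠ Finset.univ → 0 < cutH E edge g S →
      g e (S ∩ edge e) / cutH E edge g S ≤ rho E edge g e := by
  intro S _ hS hcut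
  calc g e (S ∩ edge e) / cutH E edge g S
      ≤ (∑ u ∈ S, ∑ v ∈ Sᶜ, dirCut (g e) (edge e) u v) / cutH E edge g S := by
        gcongr
        exact apply_inter_le_sum_dirCut (hg0 e he) (hnn e he) (hsub e he) hS
    _ = ∑ u ∈ S, ∑ v ∈ Sᶜ, dirCut (g e) (edge e) u v / cutH E edge g S := by
        simp only [sum_div]
    _ ≤ rho E edge g e := sum_dirCut_div_cutH_le_rho hnn he S
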